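/- Let the weight of edge (u,v) be decreased to w'(u,v), and for a given pair of vertices s, t let D(s,t) = d(s,u) + w'(u,v) + d(v,t). Then: (1) if d(s,t) < D(s,t), then d'(s,t) = d(s,t) and σ'_{st} = σ_{st}; (2) if d(s,t) = D(s,t), then d'(s,t) = d(s,t) and σ'_{st} = σ_{st} + σ_{su} · σ_{vt}; (3) if d(s,t) > D(s,t), then d'(s,t) = D(s,t) and σ'_{st} = σ_{su} · σ_{vt}. -/

import Mathlib

/-
A path avoiding the edge `(u,v)` has the same weight before and after the update, and a path
using it, cut at its first use, is a path `s → u` avoiding `(u,v)`, then the edge, then a path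
`v → t`; hence `d'(s,t) = min (d(s,t)) (D(s,t))`. The shortest `w'`-paths avoiding `(u,v)` are the
shortest `w`-paths when `d ≤ D` (and there are none when `D < d`), while those using `(u,v)` are the
concatenations of a shortest path `s → u` with a shortest path `v → t` when `D ≤ d` (and there are
none when `d < D`). Positive weights on finitely many vertices leave only finitely many shortest
paths, so `σ'_{st}` is the sum of the two counts.
-/

open scoped ENNReal

namespace BC

variable {V : Type*}

/-- `p` is a path from `s` to `t` in the weighted digraph with weight function `w`;
an edge is present iff its weight is not `⊤`. -/
def IsPath (w : V → V → ℝ≥0∞) (s t : V) (p : List V) : Prop :=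
  p ≠ [] ∧ p.head? = some s ∧ p.getLast? = some t ∧ p.Chain' (fun a b => w a b ≠ ⊤)

/-- The weight of a path: the sum of the weights of its consecutive edges. -/
noncomputable def pWeight (w : V → V → ℝ≥0∞) (p : List V) : ℝ≥0∞ :=
  ((p.zip p.tail).map fun e => w e.1 e.2).sum

/-- The shortest-path distance `d(s,t)` (equal to `⊤` if no path exists). -/
noncomputable def dist (w : V → V → ℝ≥0∞) (s t : V) : ℝ≥0∞ :=
  ⨅ p ∈ {p | IsPath w s t p}, pWeight w p

/-- `p` is a shortest path from `s` to `t`. -/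
def IsShortest (w : V → V → ℝ≥0∞) (s t : V) (p : List V) : Prop :=
  IsPath w s t p ∧ pWeight w p = dist w s t

/-- `σ_{st}`: the number of shortest paths from `s` to `t`. -/
noncomputable def nsp (w : V → V → ℝ≥0∞) (s t : V) : ℕ :=
  Set.ncard {p | IsShortest w s t p}

/-- `σ_{st}(x)`: the number of shortest paths from `s` to `t` passing through `x`. -/
noncomputable def nspVia (w : V → V → ℝ≥0∞) (s t x : V) : ℕ :=
  Set.ncard {p | IsShortest w s t p ∧ x ∈ p}

/-- The directed edge `(a,b)` lies on the path `p`. -/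
def edgeOn (p : List V) (a b : V) : Prop := (a, b) ∈ p.zip p.tail

/-- The shortest-path DAG rooted at `s`: the edges lying on shortest paths from `s`. -/
def dagSet (w : V → V → ℝ≥0∞) (s : V) : Set (V × V) :=
  {e | w e.1 e.2 ≠ ⊤ ∧ dist w s e.1 ≠ ⊤ ∧ dist w s e.1 + w e.1 e.2 = dist w s e.2}

lemma eq_and_eq_of_add_add_eq {a a' b b' c : ℝ≥0∞} (h : a + c + b = a' + c + b')
    (ha : a' ≤ a) (hb : b' ≤ b) (htop : a + c + b ≠ ⊤) : a = a' ∧ b = b' := by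
  have hc : c ≠ ⊤ := fun hc => htop (by simp [hc])
  have ha' : a' ≠ ⊤ := ne_top_of_le_ne_top (fun h' => htop (by simp [h'])) ha
  have hb' : b' ≠ ⊤ := ne_top_of_le_ne_top (fun h' => htop (by simp [h'])) hb
  refine ⟨le_antisymm ?_ ha, le_antisymm ?_ hb⟩
  · refine ENNReal.le_of_add_le_add_right (ENNReal.add_ne_top.2 ⟨hc, hb'⟩) ?_
    calc a + (c + b') ≤ a + c + b := by rw [← add_assoc]; gcongr
      _ = a' + (c + b') := by rw [h, add_assoc]
  · refine ENNReal.le_of_add_le_add_left (ENNReal.add_ne_top.2 ⟨ha', hc⟩) ?_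
    calc a' + c + b ≤ a + c + b := by gcongr
      _ = a' + c + b' := h

section Paths

variable {w w' : V → V → ℝ≥0∞} {s t u v x y : V} {p q : List V}

lemma isChain_iff_forall_mem_zip_tail {α : Type*} {R : α → α → Prop} :
    ∀ {l : List α}, l.IsChain R ↔ ∀ e ∈ l.zip l.tail, R e.1 e.2
  | [] | [_] => by simp
  | a :: b :: l => by
    rw [List.isChain_cons_cons, isChain_iff_forall_mem_zip_tail]
    simp

lemma zip_tail_append (hp : p.getLast? = some x) (hq : q.head? = some y) :
    (p ++ q).zip (p ++ q).tail = p.zip p.tail ++ (x, y) :: q.zip q.tail := by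
  induction p with
  | nil => simp at hp
  | cons a p ih =>
    cases p with
    | nil =>
      obtain ⟨rfl⟩ : a = x := by simpa using hp
      obtain ⟨b, q, rfl⟩ := List.exists_cons_of_ne_nil (l := q) (by rintro rfl; simp at hq)
      obtain ⟨rfl⟩ : b = y := by simpa using hq
      simp
    | cons b p =>
      have := ih (by simpa [List.getLast?_cons_cons] using hp)
      simp only [List.cons_append, List.tail_cons, List.zip_cons_cons] at this ⊢
      rw [this]

lemma edgeOn_append (hp : p.getLast? = some x) (hq : q.head? = some y) :
    edgeOn (p ++ q) x y := by
  simp [edgeOn, zip_tail_append hp hq]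

lemma edgeOn_cons_cons {a b : V} {l : List V} :
    edgeOn (a :: b :: l) x y ↔ (a, b) = (x, y) ∨ edgeOn (b :: l) x y := by
  simp [edgeOn, eq_comm]

lemma exists_append_of_edgeOn : ∀ {p : List V}, edgeOn p x y →
    ∃ p₁ p₂, p = p₁ ++ p₂ ∧ p₁.getLast? = some x ∧ p₂.head? = some y ∧ ¬ edgeOn p₁ x y
  | [], h | [_], h => by simp [edgeOn] at h
  | a :: b :: l, h => by
    by_cases hab : (a, b) = (x, y)
    · obtain ⟨rfl, rfl⟩ := Prod.ext_iff.1 hab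
      exact ⟨[a], b :: l, rfl, rfl, rfl, by simp [edgeOn]⟩
    obtain ⟨p₁, p₂, hbl, h₁, h₂, hn⟩ :=
      exists_append_of_edgeOn ((edgeOn_cons_cons.1 h).resolve_left hab)
    obtain ⟨c, p₁, rfl⟩ := List.exists_cons_of_ne_nil (l := p₁) (by rintro rfl; simp at h₁)
    obtain ⟨rfl, rfl⟩ : b = c ∧ l = p₁ ++ p₂ := by simpa using hbl
    refine ⟨a :: b :: p₁, p₂, rfl, by simpa [List.getLast?_cons_cons] using h₁, h₂, ?_⟩
    rw [edgeOn_cons_cons]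
    exact fun h => h.elim hab hn

lemma append_inj_of_not_edgeOn {p₁ p₂ q₁ q₂ : List V} (h : p₁ ++ p₂ = q₁ ++ q₂)
    (hp₁ : p₁.getLast? = some x) (hq₁ : q₁.getLast? = some x)
    (hp₂ : p₂.head? = some y) (hq₂ : q₂.head? = some y)
    (np : ¬ edgeOn p₁ x y) (nq : ¬ edgeOn q₁ x y) : p₁ = q₁ ∧ p₂ = q₂ := by
  rcases List.append_eq_append_iff.1 h with ⟨r, rfl, rfl⟩ | ⟨r, rfl, rfl⟩
  · cases r with
    | nil => simp
    | cons c r => exact (nq (edgeOn_append hp₁ (by simpa using hp₂))).elim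
  · cases r with
    | nil => simp
    | cons c r => exact (np (edgeOn_append hq₁ (by simpa using hq₂))).elim

lemma isPath_append_iff (hp : p.getLast? = some x) (hq : q.head? = some y) :
    IsPath w s t (p ++ q) ↔ IsPath w s x p ∧ IsPath w y t q ∧ w x y ≠ ⊤ := by
  have hp₀ : p ≠ [] := by rintro rfl; simp at hp
  have hq₀ : q ≠ [] := by rintro rfl; simp at hq
  simp only [IsPath, List.Chain', List.head?_append_of_ne_nil _ hp₀,
    List.getLast?_append_of_ne_nil _ hq₀, List.isChain_append, hp, hq, Option.mem_def,
    Option.some_inj, forall_eq', ne_eq, List.append_eq_nil_iff, hp₀, hq₀]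
  tauto

lemma pWeight_append (hp : p.getLast? = some x) (hq : q.head? = some y) :
    pWeight w (p ++ q) = pWeight w p + w x y + pWeight w q := by
  simp [pWeight, zip_tail_append hp hq, add_assoc]

lemma IsPath.pWeight_ne_top (h : IsPath w s t p) : pWeight w p ≠ ⊤ := by
  have hsum : ∀ l : List ℝ≥0∞, (∀ a ∈ l, a ≠ ⊤) → l.sum ≠ ⊤ := fun l => by
    induction l <;> simp_all [ENNReal.add_eq_top]
  refine hsum _ fun a ha => ?_
  obtain ⟨e, he, rfl⟩ := List.mem_map.1 ha
  exact isChain_iff_forall_mem_zip_tail.1 h.2.2.2 e he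

lemma dist_le_pWeight (h : IsPath w s t p) : dist w s t ≤ pWeight w p :=
  iInf₂_le p h

lemma IsShortest.dist_ne_top (h : IsShortest w s t p) : dist w s t ≠ ⊤ :=
  h.2 ▸ h.1.pWeight_ne_top

lemma IsPath.mono (hle : ∀ a b, w' a b ≤ w a b) (h : IsPath w s t p) : IsPath w' s t p :=
  ⟨h.1, h.2.1, h.2.2.1, h.2.2.2.imp fun a b hab => ne_top_of_le_ne_top hab (hle a b)⟩

lemma pWeight_mono (hle : ∀ a b, w' a b ≤ w a b) (p : List V) : pWeight w' p ≤ pWeight w p :=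
  List.sum_le_sum fun e _ => hle e.1 e.2

lemma dist_mono (hle : ∀ a b, w' a b ≤ w a b) : dist w' s t ≤ dist w s t :=
  le_iInf₂ fun p hp => (dist_le_pWeight (hp.mono hle)).trans (pWeight_mono hle p)

lemma IsPath.add_add_le_pWeight (h : IsPath w s t p) (he : edgeOn p u v) :
    dist w s u + w u v + dist w v t ≤ pWeight w p := by
  obtain ⟨p₁, p₂, rfl, h₁, h₂, -⟩ := exists_append_of_edgeOn he
  obtain ⟨hp₁, hp₂, -⟩ := (isPath_append_iff h₁ h₂).1 h
  rw [pWeight_append h₁ h₂]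
  gcongr
  exacts [dist_le_pWeight hp₁, dist_le_pWeight hp₂]

lemma IsShortest.not_edgeOn_of_target (h : IsShortest w s u p) (h0 : w u v ≠ 0) :
    ¬ edgeOn p u v := fun he => by
  have := h.1.add_add_le_pWeight he
  rw [h.2] at this
  exact (ENNReal.lt_add_right h.dist_ne_top h0).not_ge (le_self_add.trans this)

lemma IsShortest.not_edgeOn_of_source (h : IsShortest w v t p) (h0 : w u v ≠ 0) :
    ¬ edgeOn p u v := fun he => by
  have := h.1.add_add_le_pWeight he
  rw [h.2, add_assoc, add_comm (w u v)] at this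
  exact (ENNReal.lt_add_right h.dist_ne_top h0).not_ge (le_add_self.trans this)

lemma IsShortest.not_edgeOn_of_lt {c : ℝ≥0∞} (h : IsShortest w s t p) (hc : c < w u v)
    (hd : dist w s t ≤ dist w s u + c + dist w v t) : ¬ edgeOn p u v := fun he => by
  have hle := h.1.add_add_le_pWeight he
  rw [h.2] at hle
  have hsu : dist w s u ≠ ⊤ :=
    ne_top_of_le_ne_top h.dist_ne_top (le_self_add.trans (le_self_add.trans hle))
  have hvt : dist w v t ≠ ⊤ := ne_top_of_le_ne_top h.dist_ne_top (le_add_self.trans hle)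
  exact (hd.trans_lt (ENNReal.add_lt_add_right hvt (ENNReal.add_lt_add_left hsu hc))).not_ge hle

lemma length_sub_one_mul_le_pWeight {ε : ℝ≥0∞} (hε : ∀ a b, ε ≤ w a b) (p : List V) :
    ((p.length - 1 : ℕ) : ℝ≥0∞) * ε ≤ pWeight w p := by
  have hlen : ((p.zip p.tail).map fun e => w e.1 e.2).length = p.length - 1 := by
    simp only [List.length_map, List.length_zip, List.length_tail]
    omega
  rw [← nsmul_eq_mul, ← hlen]
  exact List.card_nsmul_le_sum _ _ fun _ ha => by
    obtain ⟨e, -, rfl⟩ := List.mem_map.1 ha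
    exact hε e.1 e.2

lemma injOn_append_isShortest (h0 : w u v ≠ 0) :
    Set.InjOn (fun q : List V × List V => q.1 ++ q.2)
      ({p | IsShortest w s u p} ×ˢ {p | IsShortest w v t p}) := by
  rintro ⟨p₁, p₂⟩ ⟨hp₁, hp₂⟩ ⟨q₁, q₂⟩ ⟨hq₁, hq₂⟩ h
  obtain ⟨rfl, rfl⟩ := append_inj_of_not_edgeOn h hp₁.1.2.2.1 hq₁.1.2.2.1 hp₂.1.2.1 hq₂.1.2.1
    (hp₁.not_edgeOn_of_target h0) (hq₁.not_edgeOn_of_target h0)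
  rfl

end Paths

section Finiteness

variable [Finite V] {w : V → V → ℝ≥0∞} {s t : V}

lemma exists_pos_le_weight (hpos : ∀ a b, 0 < w a b) : ∃ ε, 0 < ε ∧ ∀ a b, ε ≤ w a b := by
  cases isEmpty_or_nonempty V
  · exact ⟨1, one_pos, fun a => isEmptyElim a⟩
  · obtain ⟨e, he⟩ := Finite.exists_min fun e : V × V => w e.1 e.2
    exact ⟨_, hpos e.1 e.2, fun a b => he (a, b)⟩

lemma finite_setOf_pWeight_le (hpos : ∀ a b, 0 < w a b) {X : ℝ≥0∞} (hX : X ≠ ⊤) :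
    {p | pWeight w p ≤ X}.Finite := by
  obtain ⟨ε, hε₀, hε⟩ := exists_pos_le_weight hpos
  obtain ⟨N, hN⟩ := ENNReal.exists_nat_gt (ENNReal.div_ne_top hX hε₀.ne')
  refine (List.finite_length_le V N).subset fun p hp => ?_
  have : ((p.length - 1 : ℕ) : ℝ≥0∞) < N :=
    ((ENNReal.le_div_iff_mul_le (.inl hε₀.ne') (.inr hX)).2
      ((length_sub_one_mul_le_pWeight hε p).trans hp)).trans_lt hN
  norm_cast at this
  exact Nat.le_of_pred_lt this

lemma finite_setOf_isShortest (hpos : ∀ a b, 0 < w a b) (s t : V) :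
    {p | IsShortest w s t p}.Finite := by
  by_cases hd : dist w s t = ⊤
  · exact Set.finite_empty.subset fun p hp => hp.dist_ne_top hd
  · exact (finite_setOf_pWeight_le hpos hd).subset fun p hp => hp.2.le

lemma exists_isShortest (hpos : ∀ a b, 0 < w a b) (hd : dist w s t ≠ ⊤) :
    ∃ p, IsShortest w s t p := by
  obtain ⟨p₀, hp₀, hlt⟩ : ∃ p, IsPath w s t p ∧ pWeight w p < ⊤ := by
    simpa [dist, iInf_lt_iff] using hd.lt_top
  obtain ⟨p, hp, hmin⟩ := Set.exists_min_image {p | IsPath w s t p ∧ pWeight w p ≤ pWeight w p₀}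
    (pWeight w) ((finite_setOf_pWeight_le hpos hlt.ne).subset fun p hp => hp.2) ⟨p₀, hp₀, le_rfl⟩
  refine ⟨p, hp.1, le_antisymm (le_iInf₂ fun q hq => ?_) (dist_le_pWeight hp.1)⟩
  by_cases hqp : pWeight w q ≤ pWeight w p₀
  · exact hmin q ⟨hq, hqp⟩
  · exact hp.2.trans (not_le.1 hqp).le

lemma nsp_eq_ncard_add_ncard (hpos : ∀ a b, 0 < w a b) (s t : V) (P : List V → Prop) :
    nsp w s t = {p | IsShortest w s t p ∧ ¬ P p}.ncard + {p | IsShortest w s t p ∧ P p}.ncard := by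
  rw [add_comm, nsp, ← Set.ncard_inter_add_ncard_sdiff_eq_ncard _ {p | P p}
    (finite_setOf_isShortest hpos s t)]
  rfl

end Finiteness

section Update

variable {w w' : V → V → ℝ≥0∞} {u v s t : V} {p : List V}

lemma weight_eq_of_not_edgeOn (hsame : ∀ a b : V, (a, b) ≠ (u, v) → w' a b = w a b)
    (hn : ¬ edgeOn p u v) : ∀ e ∈ p.zip p.tail, w' e.1 e.2 = w e.1 e.2 :=
  fun e he => hsame e.1 e.2 fun h => hn (by rwa [edgeOn, ← h])

lemma pWeight_eq_of_not_edgeOn (hsame : ∀ a b : V, (a, b) ≠ (u, v) → w' a b = w a b)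
    (hn : ¬ edgeOn p u v) : pWeight w' p = pWeight w p :=
  congrArg List.sum (List.map_congr_left (weight_eq_of_not_edgeOn hsame hn))

lemma isPath_iff_of_not_edgeOn (hsame : ∀ a b : V, (a, b) ≠ (u, v) → w' a b = w a b)
    (hn : ¬ edgeOn p u v) : IsPath w' s t p ↔ IsPath w s t p := by
  simp only [IsPath, List.Chain', isChain_iff_forall_mem_zip_tail]
  refine and_congr_right' (and_congr_right' (and_congr_right' (forall₂_congr fun e he => ?_)))
  rw [weight_eq_of_not_edgeOn hsame hn e he]

lemma isShortest_iff_of_not_edgeOn (hsame : ∀ a b : V, (a, b) ≠ (u, v) → w' a b = w a b)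
    (hn : ¬ edgeOn p u v) (hd : dist w' s t = dist w s t) :
    IsShortest w' s t p ↔ IsShortest w s t p := by
  rw [IsShortest, IsShortest, isPath_iff_of_not_edgeOn hsame hn, pWeight_eq_of_not_edgeOn hsame hn,
    hd]

lemma dist_le_pWeight_update (hsame : ∀ a b : V, (a, b) ≠ (u, v) → w' a b = w a b) {q : List V}
    (hq : IsPath w' v t q) : dist w v t ≤ pWeight w' q := by
  by_cases he : edgeOn q u v
  · obtain ⟨q₁, q₂, rfl, h₁, h₂, -⟩ := exists_append_of_edgeOn he
    obtain ⟨-, hq₂, -⟩ := (isPath_append_iff h₁ h₂).1 hq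
    have hshorter : q₂.length < (q₁ ++ q₂).length := by
      simpa [List.length_pos_iff] using fun h : q₁ = [] => by simp [h] at h₁
    calc dist w v t ≤ pWeight w' q₂ := dist_le_pWeight_update hsame hq₂
      _ ≤ pWeight w' (q₁ ++ q₂) := by rw [pWeight_append h₁ h₂]; exact le_add_self
  · rw [pWeight_eq_of_not_edgeOn hsame he]
    exact dist_le_pWeight ((isPath_iff_of_not_edgeOn hsame he).1 hq)
termination_by q.length

lemma add_add_le_pWeight_update (hsame : ∀ a b : V, (a, b) ≠ (u, v) → w' a b = w a b)
    (hp : IsPath w' s t p) (he : edgeOn p u v) :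
    dist w s u + w' u v + dist w v t ≤ pWeight w' p := by
  obtain ⟨p₁, p₂, rfl, h₁, h₂, hn⟩ := exists_append_of_edgeOn he
  obtain ⟨hp₁, hp₂, -⟩ := (isPath_append_iff h₁ h₂).1 hp
  rw [pWeight_append h₁ h₂, pWeight_eq_of_not_edgeOn hsame hn]
  gcongr
  · exact dist_le_pWeight ((isPath_iff_of_not_edgeOn hsame hn).1 hp₁)
  · exact dist_le_pWeight_update hsame hp₂

theorem dist_update [Finite V] (hpos : ∀ a b, 0 < w a b) (hle : w' u v ≤ w u v)
    (hsame : ∀ a b : V, (a, b) ≠ (u, v) → w' a b = w a b) (s t : V) :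
    dist w' s t = min (dist w s t) (dist w s u + w' u v + dist w v t) := by
  have hle' : ∀ a b, w' a b ≤ w a b := fun a b => by
    by_cases h : (a, b) = (u, v)
    · obtain ⟨rfl, rfl⟩ := Prod.ext_iff.1 h
      exact hle
    · exact (hsame a b h).le
  refine le_antisymm (le_min (dist_mono hle') ?_) (le_iInf₂ fun p hp => ?_)
  · by_cases hD : dist w s u + w' u v + dist w v t = ⊤
    · exact hD ▸ le_top
    obtain ⟨⟨hsu, huv⟩, hvt⟩ : (dist w s u ≠ ⊤ ∧ w' u v ≠ ⊤) ∧ dist w v t ≠ ⊤ := by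
      simpa [ENNReal.add_eq_top, not_or] using hD
    obtain ⟨p₁, hp₁⟩ := exists_isShortest hpos hsu
    obtain ⟨p₂, hp₂⟩ := exists_isShortest hpos hvt
    have h₁ := hp₁.1.2.2.1
    have h₂ := hp₂.1.2.1
    calc dist w' s t ≤ pWeight w' (p₁ ++ p₂) :=
          dist_le_pWeight ((isPath_append_iff h₁ h₂).2 ⟨hp₁.1.mono hle', hp₂.1.mono hle', huv⟩)
      _ = pWeight w' p₁ + w' u v + pWeight w' p₂ := pWeight_append h₁ h₂
      _ ≤ pWeight w p₁ + w' u v + pWeight w p₂ := by gcongr <;> exact pWeight_mono hle' _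
      _ = dist w s u + w' u v + dist w v t := by rw [hp₁.2, hp₂.2]
  · by_cases he : edgeOn p u v
    · exact (min_le_right _ _).trans (add_add_le_pWeight_update hsame hp he)
    · rw [pWeight_eq_of_not_edgeOn hsame he]
      exact (min_le_left _ _).trans (dist_le_pWeight ((isPath_iff_of_not_edgeOn hsame he).1 hp))

end Update

section Count

variable [Finite V] {w w' : V → V → ℝ≥0∞} {u v s t : V}

lemma setOf_isShortest_update_not_edgeOn_of_le (hpos : ∀ a b, 0 < w a b)
    (hdec : w' u v < w u v) (hsame : ∀ a b : V, (a, b) ≠ (u, v) → w' a b = w a b)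
    (h : dist w s t ≤ dist w s u + w' u v + dist w v t) :
    {p | IsShortest w' s t p ∧ ¬ edgeOn p u v} = {p | IsShortest w s t p} := by
  have hd : dist w' s t = dist w s t := by rw [dist_update hpos hdec.le hsame, min_eq_left h]
  ext p
  refine ⟨fun ⟨hp, hn⟩ => (isShortest_iff_of_not_edgeOn hsame hn hd).1 hp, fun hp => ?_⟩
  have hn := hp.not_edgeOn_of_lt hdec h
  exact ⟨(isShortest_iff_of_not_edgeOn hsame hn hd).2 hp, hn⟩

lemma setOf_isShortest_update_not_edgeOn_of_lt (hpos : ∀ a b, 0 < w a b)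
    (hle : w' u v ≤ w u v) (hsame : ∀ a b : V, (a, b) ≠ (u, v) → w' a b = w a b)
    (h : dist w s u + w' u v + dist w v t < dist w s t) :
    {p | IsShortest w' s t p ∧ ¬ edgeOn p u v} = ∅ := by
  refine Set.eq_empty_of_forall_notMem fun p ⟨hp, hn⟩ => h.not_ge ?_
  rw [← min_eq_right h.le, ← dist_update hpos hle hsame, ← hp.2, pWeight_eq_of_not_edgeOn hsame hn]
  exact dist_le_pWeight ((isPath_iff_of_not_edgeOn hsame hn).1 hp.1)

lemma setOf_isShortest_update_edgeOn_of_lt (hpos : ∀ a b, 0 < w a b)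
    (hle : w' u v ≤ w u v) (hsame : ∀ a b : V, (a, b) ≠ (u, v) → w' a b = w a b)
    (h : dist w s t < dist w s u + w' u v + dist w v t) :
    {p | IsShortest w' s t p ∧ edgeOn p u v} = ∅ := by
  refine Set.eq_empty_of_forall_notMem fun p ⟨hp, he⟩ => h.not_ge ?_
  rw [← min_eq_left h.le, ← dist_update hpos hle hsame, ← hp.2]
  exact add_add_le_pWeight_update hsame hp.1 he

lemma setOf_isShortest_update_edgeOn_eq_image (hpos : ∀ a b, 0 < w a b) (h0 : w' u v ≠ 0)
    (hdec : w' u v < w u v) (hsame : ∀ a b : V, (a, b) ≠ (u, v) → w' a b = w a b)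
    (hd : dist w' s t = dist w s u + w' u v + dist w v t) :
    {p | IsShortest w' s t p ∧ edgeOn p u v} =
      (fun q : List V × List V => q.1 ++ q.2) ''
        ({p | IsShortest w s u p} ×ˢ {p | IsShortest w v t p}) := by
  have hvt : dist w' v t = dist w v t := by
    rw [dist_update hpos hdec.le hsame, min_eq_left le_add_self]
  ext p
  simp only [Set.mem_ofPred_eq, Set.mem_image, Set.mem_prod, Prod.exists]
  constructor
  · rintro ⟨hp, he⟩
    obtain ⟨p₁, p₂, rfl, h₁, h₂, hn₁⟩ := exists_append_of_edgeOn he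
    obtain ⟨hp₁, hp₂, -⟩ := (isPath_append_iff h₁ h₂).1 hp.1
    rw [isPath_iff_of_not_edgeOn hsame hn₁] at hp₁
    have hw : pWeight w p₁ + w' u v + pWeight w' p₂ = dist w s u + w' u v + dist w' v t := by
      rw [← pWeight_eq_of_not_edgeOn hsame hn₁, ← pWeight_append h₁ h₂, hp.2, hd, hvt]
    obtain ⟨hw₁, hw₂⟩ := eq_and_eq_of_add_add_eq hw (dist_le_pWeight hp₁) (dist_le_pWeight hp₂)
      (hw ▸ hvt ▸ hd ▸ hp.dist_ne_top)
    have hs₂ : IsShortest w' v t p₂ := ⟨hp₂, hw₂⟩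
    exact ⟨p₁, p₂, ⟨⟨hp₁, hw₁⟩,
      (isShortest_iff_of_not_edgeOn hsame (hs₂.not_edgeOn_of_source h0) hvt).1 hs₂⟩, rfl⟩
  · rintro ⟨p₁, p₂, ⟨hp₁, hp₂⟩, rfl⟩
    have hw0 : w u v ≠ 0 := (pos_of_gt hdec).ne'
    have hn₁ := hp₁.not_edgeOn_of_target hw0
    have hn₂ := hp₂.not_edgeOn_of_source hw0
    have h₁ := hp₁.1.2.2.1
    have h₂ := hp₂.1.2.1
    refine ⟨⟨(isPath_append_iff h₁ h₂).2 ⟨(isPath_iff_of_not_edgeOn hsame hn₁).2 hp₁.1,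
      (isPath_iff_of_not_edgeOn hsame hn₂).2 hp₂.1, hdec.ne_top⟩, ?_⟩, edgeOn_append h₁ h₂⟩
    rw [pWeight_append h₁ h₂, pWeight_eq_of_not_edgeOn hsame hn₁,
      pWeight_eq_of_not_edgeOn hsame hn₂, hp₁.2, hp₂.2, hd]

lemma ncard_setOf_isShortest_update_edgeOn_of_le (hpos : ∀ a b, 0 < w a b) (h0 : w' u v ≠ 0)
    (hdec : w' u v < w u v) (hsame : ∀ a b : V, (a, b) ≠ (u, v) → w' a b = w a b)
    (h : dist w s u + w' u v + dist w v t ≤ dist w s t) :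
    {p | IsShortest w' s t p ∧ edgeOn p u v}.ncard = nsp w s u * nsp w v t := by
  have hd : dist w' s t = dist w s u + w' u v + dist w v t := by
    rw [dist_update hpos hdec.le hsame, min_eq_right h]
  rw [setOf_isShortest_update_edgeOn_eq_image hpos h0 hdec hsame hd,
    (injOn_append_isShortest (pos_of_gt hdec).ne').ncard_image, Set.ncard_prod]
  rfl

end Count

/-- Lemma 2: after decreasing the weight of `(u,v)` to `w'(u,v)`,
with `D(s,t) = d(s,u) + w'(u,v) + d(v,t)`:
(1) if `d(s,t) < D(s,t)` then `d'(s,t) = d(s,t)` and `σ'_{st} = σ_{st}`;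
(2) if `d(s,t) = D(s,t)` then `d'(s,t) = d(s,t)` and `σ'_{st} = σ_{st} + σ_{su}·σ_{vt}`;
(3) if `d(s,t) > D(s,t)` then `d'(s,t) = D(s,t)` and `σ'_{st} = σ_{su}·σ_{vt}`. -/
theorem incremental_update_dist_sigma [Fintype V] (w w' : V → V → ℝ≥0∞) (u v : V)
    (hpos : ∀ a b, 0 < w a b) (hpos' : ∀ a b, 0 < w' a b)
    (hdec : w' u v < w u v)
    (hsame : ∀ a b : V, (a, b) ≠ (u, v) → w' a b = w a b) (s t : V) :
    (dist w s t < dist w s u + w' u v + dist w v t →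
      dist w' s t = dist w s t ∧ nsp w' s t = nsp w s t) ∧
    (dist w s t = dist w s u + w' u v + dist w v t →
      dist w' s t = dist w s t ∧
      nsp w' s t = nsp w s t + nsp w s u * nsp w v t) ∧
    (dist w s u + w' u v + dist w v t < dist w s t →
      dist w' s t = dist w s u + w' u v + dist w v t ∧
      nsp w' s t = nsp w s u * nsp w v t) := by
  have hdist := dist_update hpos hdec.le hsame s t
  have hnsp := nsp_eq_ncard_add_ncard hpos' s t (edgeOn · u v)
  have h0 := (hpos' u v).ne'
  refine ⟨fun h => ⟨?_, ?_⟩, fun h => ⟨?_, ?_⟩, fun h => ⟨?_, ?_⟩⟩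
  · rw [hdist, min_eq_left h.le]
  · rw [hnsp, setOf_isShortest_update_not_edgeOn_of_le hpos hdec hsame h.le,
      setOf_isShortest_update_edgeOn_of_lt hpos hdec.le hsame h, Set.ncard_empty, add_zero]
    rfl
  · rw [hdist, ← h, min_self]
  · rw [hnsp, setOf_isShortest_update_not_edgeOn_of_le hpos hdec hsame h.le,
      ncard_setOf_isShortest_update_edgeOn_of_le hpos h0 hdec hsame h.ge]
    rfl
  · rw [hdist, min_eq_right h.le]
  · rw [hnsp, setOf_isShortest_update_not_edgeOn_of_lt hpos hdec.le hsame h, Set.ncard_empty,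
      zero_add, ncard_setOf_isShortest_update_edgeOn_of_le hpos h0 hdec hsame h.le]

end BC
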